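/- Assume θ₁, θ₂, θ₃ are all nonzero, m ∈ ℚ is positive, θ₁·θ₂ = 2m·θ₃², the setup of the context, and N − b² > 0. Set λ₁ := b + i·√(N − b²) and λ₂ := b − i·√(N − b²). Then the eigenspace of Ψ on V_ℂ ⊕ V_ℂ^∨ for the eigenvalue +i·√(N − b²) is {(v, λ₁·g(v)) : v ∈ V_ℂ} and that for −i·√(N − b²) is {(v, λ₂·g(v)) : v ∈ V_ℂ}; each of these eigenspaces is isotropic for ⟨,⟩_{θ,h}; and for all v,w ∈ V_ℂ one has ⟨(v, λ₁·g(v)), (w, λ₂·g(w))⟩_{θ,h} = θ₁·c⁻²·e⁻¹·(2c²e − s²/m)·ω_g(v,w). -/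

import Mathlib

/-!
Concrete model of the linear algebra of O'Grady's "Compact tori associated to hyperkähler
manifolds of Kummer type".

`V` is a free ℤ-module of rank 4; we model `V_ℂ = V ⊗ ℂ` as `Fin 4 → ℂ` (standard integral
structure), and its dual `V_ℂ^∨` also as `Fin 4 → ℂ` via the dot-product pairing
`⟨ℓ, v⟩ = ℓ ⬝ᵥ v` (dual basis coordinates).  The volume form `vol : ⋀⁴V → ℤ` is the one
with `vol(e₀∧e₁∧e₂∧e₃) = 1`.  We model `⋀²V_ℂ` (and `⋀²V_ℂ^∨`) as `Fin 6 → ℂ` using the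
basis `e₀∧e₁, e₀∧e₂, e₀∧e₃, e₁∧e₂, e₁∧e₃, e₂∧e₃` (resp. the dual one).
-/

noncomputable section

open Matrix Complex

/-- Model of `V_ℂ` (and of its dual `V_ℂ^∨`). -/
abbrev Vc : Type := Fin 4 → ℂ

/-- Model of `⋀²V_ℂ` (and of `⋀²V_ℂ^∨`), coordinates w.r.t. the basis
`e₀∧e₁, e₀∧e₂, e₀∧e₃, e₁∧e₂, e₁∧e₃, e₂∧e₃`. -/
abbrev W2 : Type := Fin 6 → ℂ

/-- The wedge product `v ∧ w ∈ ⋀²V_ℂ` of two vectors. -/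
def w2 (v w : Vc) : W2 :=
  ![v 0 * w 1 - v 1 * w 0, v 0 * w 2 - v 2 * w 0, v 0 * w 3 - v 3 * w 0,
    v 1 * w 2 - v 2 * w 1, v 1 * w 3 - v 3 * w 1, v 2 * w 3 - v 3 * w 2]

/-- `vol(a ∧ b)` for `a, b ∈ ⋀²V_ℂ`: the nondegenerate symmetric pairing `( , )` on `⋀²V_ℂ`.
(The same formula computes the dual volume form `vol^∨` on `⋀²V_ℂ^∨` in dual coordinates.) -/
def volp (a b : W2) : ℂ :=
  a 0 * b 5 - a 1 * b 4 + a 2 * b 3 + a 3 * b 2 - a 4 * b 1 + a 5 * b 0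

/-- The isomorphism `ι : ⋀²(V_ℂ^∨) → ⋀²V_ℂ` defined by the pairing `( , )`:
it satisfies `vol (ι Ω ∧ v ∧ w) = Ω(v,w)` for all `v, w`. -/
def iotaMap (Ω : W2) : W2 := ![Ω 5, -Ω 4, Ω 3, Ω 2, -Ω 1, Ω 0]

/-- The map `Φ_θ` on decomposable elements: for `x = (v,g)` and `y = (w,h)` in
`V_ℂ ⊕ V_ℂ^∨`, `Φ_θ(x ∧ y) = (θ₁·v∧w + θ₂·ι(g∧h), θ₃·(g(w) − h(v)))`. -/
def Phi (t1 t2 t3 : ℤ) (x y : Vc × Vc) : W2 × ℂ :=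
  ((t1 : ℂ) • w2 x.1 y.1 + (t2 : ℂ) • iotaMap (w2 x.2 y.2),
    (t3 : ℂ) * (x.2 ⬝ᵥ y.1 - y.2 ⬝ᵥ x.1))

/-- A map `f : V_ℂ → V_ℂ^∨` is antisymmetric if `⟨f v, w⟩ = −⟨f w, v⟩` for all `v, w`. -/
def IsAnti (f : Vc → Vc) : Prop := ∀ v w : Vc, f v ⬝ᵥ w = -(f w ⬝ᵥ v)

/-- The `i`-th standard basis vector. -/
def ef (i : Fin 4) : Vc := fun j => if j = i then 1 else 0

/-- `ω_f ∈ ⋀²(V_ℂ^∨)` attached to a map `f : V_ℂ → V_ℂ^∨`: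
`ω_f(v,w) = (1/2)(⟨f w, v⟩ − ⟨f v, w⟩)`, written in coordinates `ω_f(eᵢ,eⱼ)`, `i<j`. -/
def omegaF (f : Vc → Vc) : W2 :=
  ![(f (ef 1) ⬝ᵥ ef 0 - f (ef 0) ⬝ᵥ ef 1) / 2,
    (f (ef 2) ⬝ᵥ ef 0 - f (ef 0) ⬝ᵥ ef 2) / 2,
    (f (ef 3) ⬝ᵥ ef 0 - f (ef 0) ⬝ᵥ ef 3) / 2,
    (f (ef 2) ⬝ᵥ ef 1 - f (ef 1) ⬝ᵥ ef 2) / 2,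
    (f (ef 3) ⬝ᵥ ef 1 - f (ef 1) ⬝ᵥ ef 3) / 2,
    (f (ef 3) ⬝ᵥ ef 2 - f (ef 2) ⬝ᵥ ef 3) / 2]

/-- The Pfaffian of an antisymmetric map `f : V_ℂ → V_ℂ^∨`, defined by
`vol^∨(ω_f ∧ ω_f) = 2·Pf(f)`. -/
def pfaff (f : Vc → Vc) : ℂ := volp (omegaF f) (omegaF f) / 2

/-- Evaluation against a fixed vector, as a linear functional on the dual. -/
def dotL (u : Vc) : Vc →ₗ[ℂ] ℂ where
  toFun ℓ := ℓ ⬝ᵥ u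
  map_add' x y := add_dotProduct x y u
  map_smul' c x := by simp

/-- The annihilator `Ann(U) ⊂ V_ℂ^∨` of a subspace `U ⊂ V_ℂ`. -/
def AnnS (U : Submodule ℂ Vc) : Submodule ℂ Vc :=
  ⨅ u ∈ (U : Set Vc), LinearMap.ker (dotL u)

/-- Complex conjugation on `V_ℂ`, induced by the integral structure. -/
def cV (v : Vc) : Vc := fun i => (starRingEnd ℂ) (v i)

/-- Complex conjugation on `V_ℂ ⊕ V_ℂ^∨`, induced by the integral structure `V ⊕ V^∨`. -/
def cP (x : Vc × Vc) : Vc × Vc := (cV x.1, cV x.2)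

/-- Complex conjugation on `⋀²V_ℂ ⊕ ℂ`, induced by the real structure `⋀²V_ℝ ⊕ ℝ`. -/
def cW (x : W2 × ℂ) : W2 × ℂ := (fun k => (starRingEnd ℂ) (x.1 k), (starRingEnd ℂ) x.2)

/-- The symmetric bilinear form `(α + x·ζ, β + y·ζ) = vol(α∧β) − m·x·y` on `⋀²V_ℂ ⊕ ℂ`. -/
def Bf (m : ℚ) (x y : W2 × ℂ) : ℂ := volp x.1 y.1 - (m : ℂ) * x.2 * y.2

/-- Membership in (the affine cone over) the period domain
`D = {[σ] : (σ,σ) = 0, (σ,σ̄) > 0}`. -/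
def memD (m : ℚ) (σ : W2 × ℂ) : Prop :=
  σ ≠ 0 ∧ Bf m σ σ = 0 ∧ (Bf m σ (cW σ)).im = 0 ∧ 0 < (Bf m σ (cW σ)).re

/-- The class `h₀ = c(e·v₁^∨∧v₂^∨ + v₃^∨∧v₄^∨) ∈ ⋀²V^∨`, in dual coordinates. -/
def h0v (c e : ℤ) : W2 := ![(c : ℂ) * (e : ℂ), 0, 0, 0, 0, (c : ℂ)]

/-- Evaluation of `h = h₀ + s·ζ^∨ ∈ (⋀²V ⊕ ℤ)^∨` on `⋀²V_ℂ ⊕ ℂ`. -/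
def hev (c e s : ℤ) (x : W2 × ℂ) : ℂ :=
  (c : ℂ) * (e : ℂ) * x.1 0 + (c : ℂ) * x.1 5 + (s : ℂ) * x.2

/-- `N = θ₁/(c²·e·θ₂)`. -/
def Nq (t1 t2 c e : ℤ) : ℚ := (t1 : ℚ) / ((c : ℚ) ^ 2 * (e : ℚ) * (t2 : ℚ))

/-- `b = s·θ₃/(c²·e·θ₂)`. -/
def bq (t2 t3 c e s : ℤ) : ℚ := (s : ℚ) * (t3 : ℚ) / ((c : ℚ) ^ 2 * (e : ℚ) * (t2 : ℚ))

/-- The endomorphism `Ψ(v,ℓ) = (g⁻¹(ℓ) − b·v, b·ℓ − N·g(v))` of `V_ℂ ⊕ V_ℂ^∨`. -/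
def PsiL (g : Vc ≃ₗ[ℂ] Vc) (N b : ℚ) : (Vc × Vc) →ₗ[ℂ] Vc × Vc :=
  LinearMap.prod
    (g.symm.toLinearMap ∘ₗ LinearMap.snd ℂ Vc Vc - (b : ℂ) • LinearMap.fst ℂ Vc Vc)
    ((b : ℂ) • LinearMap.snd ℂ Vc Vc - (N : ℂ) • (g.toLinearMap ∘ₗ LinearMap.fst ℂ Vc Vc))

/-- The rational subspace `V_ℚ ⊕ V_ℚ^∨ ⊂ V_ℂ ⊕ V_ℂ^∨`. -/
def ratSet : Set (Vc × Vc) :=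
  {p | (∀ i, ∃ q : ℚ, p.1 i = (q : ℂ)) ∧ (∀ i, ∃ q : ℚ, p.2 i = (q : ℂ))}

/-- The complex number `i·√(N − b²)`. -/
def sqNb (N b : ℚ) : ℂ := Complex.I * ((Real.sqrt ((N - b ^ 2 : ℚ) : ℝ) : ℝ) : ℂ)

/-- The alternating form `⟨x,y⟩_{θ,h} = ⟨h, Φ_θ(x∧y)⟩` on `V_ℂ ⊕ V_ℂ^∨`. -/
def Eth (t1 t2 t3 c e s : ℤ) (x y : Vc × Vc) : ℂ := hev c e s (Phi t1 t2 t3 x y)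

/-! An antisymmetric `g` with `ω_g = h₀` is explicit, `g v = (c e v₁, -c e v₀, c v₃, -c v₂)`,
so on graphs of multiples of `g` the form is
`⟨(v, λ g v), (w, λ' g w)⟩_{θ,h} = (θ₁ + c²eθ₂ λλ' − sθ₃(λ + λ')) ω_g(v,w)`, where `c²e` is the
Pfaffian of `h₀`. Whenever `μ² = b² − N` the `μ`-eigenspace of `Ψ` is the graph of `(b + μ) g`, so
`λ₁, λ₂` are the roots of `X² − 2bX + N`. As `c²eθ₂ N = θ₁` and `c²eθ₂ b = sθ₃`, Vieta makes the
coefficient vanish for `λ = λ' = λᵢ`, and for `λ = λ₁, λ' = λ₂` it is `2θ₁ − 2sθ₃b`, which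
`θ₁θ₂ = 2mθ₃²` turns into the stated constant. -/

lemma dotProduct_ef (ℓ : Vc) (j : Fin 4) : ℓ ⬝ᵥ ef j = ℓ j := by
  simp [ef, dotProduct]

lemma IsAnti.apply_eq {f : Vc → Vc} (hf : IsAnti f) (v : Vc) :
    f v = ![omegaF f 0 * v 1 + omegaF f 1 * v 2 + omegaF f 2 * v 3,
      -(omegaF f 0 * v 0) + omegaF f 3 * v 2 + omegaF f 4 * v 3,
      -(omegaF f 1 * v 0) - omegaF f 3 * v 1 + omegaF f 5 * v 3,
      -(omegaF f 2 * v 0) - omegaF f 4 * v 1 - omegaF f 5 * v 2] := by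
  have hcoord : ∀ j, f v j = ∑ i, v i * ((f (ef i) ⬝ᵥ ef j - f (ef j) ⬝ᵥ ef i) / 2) := by
    intro j
    rw [← dotProduct_ef (f v), hf, dotProduct, ← Finset.sum_neg_distrib]
    refine Finset.sum_congr rfl fun i _ => ?_
    rw [hf (ef i), dotProduct_ef]
    ring
  funext j
  fin_cases j <;>
  · simp [hcoord, Fin.sum_univ_four, omegaF]
    ring

lemma IsAnti.apply_eq_of_omegaF_eq_h0v {f : Vc → Vc} (hf : IsAnti f) {c e : ℤ}
    (hω : omegaF f = h0v c e) (v : Vc) :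
    f v = ![c * e * v 1, -(c * e * v 0), c * v 3, -(c * v 2)] := by
  rw [hf.apply_eq, hω]
  simp [h0v]

lemma Eth_graph (t1 t2 t3 : ℤ) {c e : ℤ} (s : ℤ) {f : Vc → Vc} (hf : IsAnti f)
    (hω : omegaF f = h0v c e) (v w : Vc) (l l' : ℂ) :
    Eth t1 t2 t3 c e s (v, l • f v) (w, l' • f w) =
      (t1 + c ^ 2 * e * t2 * l * l' - s * t3 * (l + l')) * ((f w ⬝ᵥ v - f v ⬝ᵥ w) / 2) := by
  simp [hf.apply_eq_of_omegaF_eq_h0v hω, Eth, hev, Phi, w2, iotaMap, dotProduct, Fin.sum_univ_four]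
  ring

lemma eigenspace_PsiL (g : Vc ≃ₗ[ℂ] Vc) {N b : ℚ} {μ : ℂ} (hμ : μ ^ 2 = (b : ℂ) ^ 2 - N) :
    (Module.End.eigenspace (PsiL g N b) μ : Set (Vc × Vc)) = {p | p.2 = ((b : ℂ) + μ) • g p.1} := by
  ext ⟨v, ℓ⟩
  have hfst : g.symm ℓ - (b : ℂ) • v = μ • v ↔ ℓ = ((b : ℂ) + μ) • g v := by
    rw [sub_eq_iff_eq_add, ← add_smul, add_comm μ, LinearEquiv.symm_apply_eq, map_smul]
  simp only [SetLike.mem_coe, Module.End.mem_eigenspace_iff, Set.mem_ofPred_eq, Prod.ext_iff]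
  refine ⟨fun h => hfst.mp h.1, fun h => ⟨hfst.mpr h, ?_⟩⟩
  change (b : ℂ) • ℓ - (N : ℂ) • g v = μ • ℓ
  rw [h, smul_smul, smul_smul, ← sub_smul]
  congr 1
  linear_combination -hμ

lemma sqNb_sq {N b : ℚ} (h : 0 ≤ N - b ^ 2) : sqNb N b ^ 2 = (b : ℂ) ^ 2 - N := by
  rw [sqNb, mul_pow, I_sq, ← ofReal_pow, Real.sq_sqrt (by exact_mod_cast h)]
  push_cast
  ring

section Coefficients

variable {t1 t2 t3 c e : ℤ} (hc : c ≠ 0) (he : e ≠ 0) (h2 : t2 ≠ 0)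
include hc he h2

lemma mul_Nq : (c : ℚ) ^ 2 * e * t2 * Nq t1 t2 c e = t1 := by
  rw [Nq]
  field_simp

lemma mul_bq (s : ℤ) : (c : ℚ) ^ 2 * e * t2 * bq t2 t3 c e s = s * t3 := by
  rw [bq]
  field_simp

lemma two_mul_sub_bq (s : ℤ) {m : ℚ} (hm : m ≠ 0) (hrel : (t1 : ℚ) * t2 = 2 * m * t3 ^ 2) :
    2 * t1 - 2 * s * t3 * bq t2 t3 c e s =
      t1 * ((c : ℚ) ^ 2)⁻¹ * (e : ℚ)⁻¹ * (2 * c ^ 2 * e - s ^ 2 / m) := by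
  rw [bq]
  field_simp
  linear_combination (s : ℚ) ^ 2 * hrel

end Coefficients

theorem statement17_general (t1 t2 t3 : ℤ) (h2 : t2 ≠ 0)
    (m : ℚ) (hm : 0 < m) (hrel : (t1 : ℚ) * t2 = 2 * m * t3 ^ 2)
    (c e s : ℤ) (hc : 0 < c) (he : 0 < e)
    (g : Vc ≃ₗ[ℂ] Vc) (hg : IsAnti ⇑g) (hgw : omegaF ⇑g = h0v c e)
    (hNb : 0 < Nq t1 t2 c e - bq t2 t3 c e s ^ 2) :
    ((Module.End.eigenspace (PsiL g (Nq t1 t2 c e) (bq t2 t3 c e s))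
          (sqNb (Nq t1 t2 c e) (bq t2 t3 c e s)) : Set (Vc × Vc)) =
        {p : Vc × Vc |
          p.2 = (((bq t2 t3 c e s : ℚ) : ℂ) + sqNb (Nq t1 t2 c e) (bq t2 t3 c e s)) • g p.1} ∧
      (Module.End.eigenspace (PsiL g (Nq t1 t2 c e) (bq t2 t3 c e s))
          (-sqNb (Nq t1 t2 c e) (bq t2 t3 c e s)) : Set (Vc × Vc)) =
        {p : Vc × Vc |
          p.2 = (((bq t2 t3 c e s : ℚ) : ℂ) - sqNb (Nq t1 t2 c e) (bq t2 t3 c e s)) • g p.1}) ∧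
    (∀ v w : Vc,
      Eth t1 t2 t3 c e s
        (v, (((bq t2 t3 c e s : ℚ) : ℂ) + sqNb (Nq t1 t2 c e) (bq t2 t3 c e s)) • g v)
        (w, (((bq t2 t3 c e s : ℚ) : ℂ) + sqNb (Nq t1 t2 c e) (bq t2 t3 c e s)) • g w) = 0 ∧
      Eth t1 t2 t3 c e s
        (v, (((bq t2 t3 c e s : ℚ) : ℂ) - sqNb (Nq t1 t2 c e) (bq t2 t3 c e s)) • g v)
        (w, (((bq t2 t3 c e s : ℚ) : ℂ) - sqNb (Nq t1 t2 c e) (bq t2 t3 c e s)) • g w) = 0) ∧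
    (∀ v w : Vc,
      Eth t1 t2 t3 c e s
        (v, (((bq t2 t3 c e s : ℚ) : ℂ) + sqNb (Nq t1 t2 c e) (bq t2 t3 c e s)) • g v)
        (w, (((bq t2 t3 c e s : ℚ) : ℂ) - sqNb (Nq t1 t2 c e) (bq t2 t3 c e s)) • g w) =
        (t1 : ℂ) * ((c : ℂ) ^ 2)⁻¹ * ((e : ℂ))⁻¹ *
          (2 * (c : ℂ) ^ 2 * (e : ℂ) - (s : ℂ) ^ 2 / (m : ℂ)) *
          ((g w ⬝ᵥ v - g v ⬝ᵥ w) / 2)) := by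
  have hc' : c ≠ 0 := hc.ne'
  have he' : e ≠ 0 := he.ne'
  have hN : (c : ℂ) ^ 2 * e * t2 * Nq t1 t2 c e = t1 := by exact_mod_cast mul_Nq hc' he' h2
  have hb : (c : ℂ) ^ 2 * e * t2 * bq t2 t3 c e s = s * t3 := by
    exact_mod_cast mul_bq hc' he' h2 s
  have hcross : 2 * (t1 : ℂ) - 2 * s * t3 * bq t2 t3 c e s =
      t1 * ((c : ℂ) ^ 2)⁻¹ * (e : ℂ)⁻¹ * (2 * c ^ 2 * e - s ^ 2 / m) := by
    have := congrArg (Rat.cast : ℚ → ℂ) (two_mul_sub_bq hc' he' h2 s hm.ne' hrel)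
    push_cast at this
    exact this
  set N := Nq t1 t2 c e
  set b := bq t2 t3 c e s
  set μ := sqNb N b
  have hμ : μ ^ 2 = (b : ℂ) ^ 2 - N := sqNb_sq hNb.le
  refine ⟨⟨eigenspace_PsiL g hμ, ?_⟩, fun v w => ⟨?_, ?_⟩, fun v w => ?_⟩
  · rw [sub_eq_add_neg]
    exact eigenspace_PsiL g (by rw [neg_sq]; exact hμ)
  all_goals
    rw [Eth_graph t1 t2 t3 s hg hgw]
    set ω := (g w ⬝ᵥ v - g v ⬝ᵥ w) / 2
    set K : ℂ := c ^ 2 * e * t2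
  · linear_combination ω * (K * hμ - hN + 2 * (b + μ) * hb)
  · linear_combination ω * (K * hμ - hN + 2 * (b - μ) * hb)
  · linear_combination ω * (-K * hμ + hN + hcross)

/-- **(From the proof of Theorem 5.2 in O'Grady.)** With the setup as in the context and
`N − b² > 0`, set `λ₁ = b + i√(N−b²)`, `λ₂ = b − i√(N−b²)`.  Then the
`±i√(N−b²)`-eigenspaces of `Ψ` are `{(v, λ₁·g(v))}` resp. `{(v, λ₂·g(v))}`; each is
isotropic for `⟨,⟩_{θ,h}`; and
`⟨(v,λ₁·g v), (w,λ₂·g w)⟩_{θ,h} = θ₁·c⁻²·e⁻¹·(2c²e − s²/m)·ω_g(v,w)`. -/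
theorem statement17 (t1 t2 t3 : ℤ) (h1 : t1 ≠ 0) (h2 : t2 ≠ 0) (h3 : t3 ≠ 0)
    (m : ℚ) (hm : 0 < m) (hrel : (t1 : ℚ) * t2 = 2 * m * t3 ^ 2)
    (c e s : ℤ) (hc : 0 < c) (he : 0 < e)
    (g : Vc ≃ₗ[ℂ] Vc) (hg : IsAnti ⇑g) (hgw : omegaF ⇑g = h0v c e)
    (hNb : 0 < Nq t1 t2 c e - bq t2 t3 c e s ^ 2) :
    ((Module.End.eigenspace (PsiL g (Nq t1 t2 c e) (bq t2 t3 c e s))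
          (sqNb (Nq t1 t2 c e) (bq t2 t3 c e s)) : Set (Vc × Vc)) =
        {p : Vc × Vc |
          p.2 = (((bq t2 t3 c e s : ℚ) : ℂ) + sqNb (Nq t1 t2 c e) (bq t2 t3 c e s)) • g p.1} ∧
      (Module.End.eigenspace (PsiL g (Nq t1 t2 c e) (bq t2 t3 c e s))
          (-sqNb (Nq t1 t2 c e) (bq t2 t3 c e s)) : Set (Vc × Vc)) =
        {p : Vc × Vc |
          p.2 = (((bq t2 t3 c e s : ℚ) : ℂ) - sqNb (Nq t1 t2 c e) (bq t2 t3 c e s)) • g p.1}) ∧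
    (∀ v w : Vc,
      Eth t1 t2 t3 c e s
        (v, (((bq t2 t3 c e s : ℚ) : ℂ) + sqNb (Nq t1 t2 c e) (bq t2 t3 c e s)) • g v)
        (w, (((bq t2 t3 c e s : ℚ) : ℂ) + sqNb (Nq t1 t2 c e) (bq t2 t3 c e s)) • g w) = 0 ∧
      Eth t1 t2 t3 c e s
        (v, (((bq t2 t3 c e s : ℚ) : ℂ) - sqNb (Nq t1 t2 c e) (bq t2 t3 c e s)) • g v)
        (w, (((bq t2 t3 c e s : ℚ) : ℂ) - sqNb (Nq t1 t2 c e) (bq t2 t3 c e s)) • g w) = 0) ∧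
    (∀ v w : Vc,
      Eth t1 t2 t3 c e s
        (v, (((bq t2 t3 c e s : ℚ) : ℂ) + sqNb (Nq t1 t2 c e) (bq t2 t3 c e s)) • g v)
        (w, (((bq t2 t3 c e s : ℚ) : ℂ) - sqNb (Nq t1 t2 c e) (bq t2 t3 c e s)) • g w) =
        (t1 : ℂ) * ((c : ℂ) ^ 2)⁻¹ * ((e : ℂ))⁻¹ *
          (2 * (c : ℂ) ^ 2 * (e : ℂ) - (s : ℂ) ^ 2 / (m : ℂ)) *
          ((g w ⬝ᵥ v - g v ⬝ᵥ w) / 2)) :=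
  statement17_general t1 t2 t3 h2 m hm hrel c e s hc he g hg hgw hNb
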